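/- Let W be a gradient vector field with critical cells μ and ν such that there is a unique W-path from ∂ν to μ, and let W̃ be obtained by reversing W along this path. If cells φ, ψ satisfy φ ⊀_W ψ but φ ≺_{W̃} ψ, then φ ⪯_W ν and μ ⪯_W ψ. -/
import Mathlib


open Classical

variable {Cell : Type}

/-- A discrete vector field: a set of pairs (σ,τ) with σ a facet of τ,
each cell occurring in at most one pair. -/
def IsVectorField (facet : Cell → Cell → Prop) (V : Set (Cell × Cell)) : Prop :=
  (∀ p ∈ V, facet p.1 p.2) ∧
  ∀ p ∈ V, ∀ q ∈ V, (p.1 = q.1 ∨ p.1 = q.2 ∨ p.2 = q.1 ∨ p.2 = q.2) → p = q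

/-- The covering relation ←_V : `covRel facet V x y` means x ←_V y. -/
def covRel (facet : Cell → Cell → Prop) (V : Set (Cell × Cell)) (x y : Cell) : Prop :=
  (facet x y ∧ (x, y) ∉ V) ∨ (y, x) ∈ V

/-- The strict partial order ≺_V induced by V: transitive closure of ←_V. -/
def indOrder (facet : Cell → Cell → Prop) (V : Set (Cell × Cell)) : Cell → Cell → Prop :=
  Relation.TransGen (covRel facet V)

/-- The reflexive closure ⪯_V of ≺_V. -/
def indOrderLe (facet : Cell → Cell → Prop) (V : Set (Cell × Cell)) : Cell → Cell → Prop :=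
  Relation.ReflTransGen (covRel facet V)

/-- A V-path (σ₀,τ₀,σ₁,…,τ_{r-1},σ_r), encoded by its first cell σ₀ and the
list of pairs (τ_i, σ_{i+1}). -/
def IsVPath (facet : Cell → Cell → Prop) (V : Set (Cell × Cell)) :
    Cell → List (Cell × Cell) → Prop
  | _, [] => True
  | σ, (τ, σ') :: rest => (σ, τ) ∈ V ∧ facet σ' τ ∧ (σ', τ) ∉ V ∧ IsVPath facet V σ' rest

/-- The last cell σ_r of a V-path. -/
def pathLast (σ : Cell) (l : List (Cell × Cell)) : Cell :=
  (l.getLast?.map Prod.snd).getD σ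

/-- No nontrivial closed V-paths. -/
def NoClosedVPath (facet : Cell → Cell → Prop) (V : Set (Cell × Cell)) : Prop :=
  ∀ σ (l : List (Cell × Cell)), IsVPath facet V σ l → l ≠ [] → pathLast σ l ≠ σ

/-- A discrete gradient vector field. -/
def IsGradient (facet : Cell → Cell → Prop) (V : Set (Cell × Cell)) : Prop :=
  IsVectorField facet V ∧ NoClosedVPath facet V

/-- A cell is critical if it belongs to no pair of V. -/
def IsCritical (V : Set (Cell × Cell)) (x : Cell) : Prop :=
  ∀ p ∈ V, p.1 ≠ x ∧ p.2 ≠ x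

/-- f is a discrete Morse function with gradient vector field V. -/
def IsMorse (facet : Cell → Cell → Prop) (V : Set (Cell × Cell)) (f : Cell → ℝ) : Prop :=
  ∀ σ τ, facet σ τ → (((σ, τ) ∉ V → f σ < f τ) ∧ ((σ, τ) ∈ V → f τ ≤ f σ))

/-- f is a discrete pseudo-Morse function consistent with V. -/
def IsPseudoMorse (facet : Cell → Cell → Prop) (V : Set (Cell × Cell)) (f : Cell → ℝ) : Prop :=
  ∀ σ τ, facet σ τ → (((σ, τ) ∉ V → f σ ≤ f τ) ∧ ((σ, τ) ∈ V → f τ ≤ f σ))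

/-- The pairs (σ_i, τ_i) of a V-path given by σ₀ and l = [(τ₀,σ₁),…]. -/
def oldPairs (σ0 : Cell) (l : List (Cell × Cell)) : List (Cell × Cell) :=
  List.zip (σ0 :: l.map Prod.snd) (l.map Prod.fst)

/-- The reversed pairs (σ_{i+1}, τ_i) of a V-path. -/
def newPairs (l : List (Cell × Cell)) : List (Cell × Cell) :=
  l.map (fun p => (p.2, p.1))

/-- Reversal of V along the V-path from σ₀ ∈ ∂ρ given by l (Forman cancelation). -/
def reverseField (V : Set (Cell × Cell)) (ρ σ0 : Cell) (l : List (Cell × Cell)) :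
    Set (Cell × Cell) :=
  (V \ {p : Cell × Cell | p ∈ oldPairs σ0 l}) ∪ {p : Cell × Cell | p ∈ newPairs l} ∪ {(σ0, ρ)}

/-- A combinatorial surface (closed): facets raise dimension by one, dimensions are ≤ 2,
every 1-cell has exactly two boundary 0-cells and is a facet of exactly two 2-cells. -/
def IsCombSurface (dim : Cell → ℕ) (facet : Cell → Cell → Prop) : Prop :=
  (∀ σ τ, facet σ τ → dim τ = dim σ + 1) ∧
  (∀ x, dim x ≤ 2) ∧
  (∀ τ, dim τ = 1 → ∃ a b, a ≠ b ∧ ∀ x, facet x τ ↔ (x = a ∨ x = b)) ∧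
  (∀ τ, dim τ = 1 → ∃ A B, A ≠ B ∧ ∀ X, facet τ X ↔ (X = A ∨ X = B))

lemma pathLast_cons (σ : Cell) (p : Cell × Cell) (l : List (Cell × Cell)) :
    pathLast σ (p :: l) = pathLast p.2 l := by
  induction l generalizing σ p with
  | nil => simp [pathLast]
  | cons q t ih =>
    have h1 : pathLast σ (p :: q :: t) = pathLast σ (q :: t) := by
      simp [pathLast, List.getLast?_cons_cons]
    rw [h1, ih σ q, ← ih p.2 q]

lemma path_facts {facet : Cell → Cell → Prop} {W : Set (Cell × Cell)} :
    ∀ (l : List (Cell × Cell)) (σ : Cell), IsVPath facet W σ l →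
    indOrderLe facet W (pathLast σ l) σ ∧
    (∀ q ∈ oldPairs σ l, indOrderLe facet W q.1 σ ∧ indOrderLe facet W (pathLast σ l) q.2) ∧
    (∀ q ∈ newPairs l, indOrderLe facet W q.2 σ ∧ indOrderLe facet W (pathLast σ l) q.1) := by
  intro l
  induction l with
  | nil =>
    intro σ _
    refine ⟨Relation.ReflTransGen.refl, ?_, ?_⟩ <;> simp [oldPairs, newPairs]
  | cons p rest ih =>
    obtain ⟨τ, σ'⟩ := p
    rintro σ ⟨hστ, hfac, hσ'τ, hrest⟩
    obtain ⟨ih1, ih2, ih3⟩ := ih σ' hrest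
    have hlast : pathLast σ ((τ, σ') :: rest) = pathLast σ' rest := pathLast_cons σ (τ, σ') rest
    have cov1 : covRel facet W τ σ := Or.inr hστ
    have cov2 : covRel facet W σ' τ := Or.inl ⟨hfac, hσ'τ⟩
    have hτσ : indOrderLe facet W τ σ := Relation.ReflTransGen.single cov1
    have hσ'σ : indOrderLe facet W σ' σ := (Relation.ReflTransGen.single cov2).tail cov1
    have hmσ' : indOrderLe facet W (pathLast σ' rest) σ' := ih1
    have hold : oldPairs σ ((τ, σ') :: rest) = (σ, τ) :: oldPairs σ' rest := by
      simp [oldPairs]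
    have hnew : newPairs ((τ, σ') :: rest) = (σ', τ) :: newPairs rest := by
      simp [newPairs]
    rw [hlast, hold, hnew]
    refine ⟨hmσ'.trans hσ'σ, ?_, ?_⟩
    · rintro q hq
      rcases List.mem_cons.1 hq with h | h
      · subst h
        exact ⟨Relation.ReflTransGen.refl, hmσ'.tail cov2⟩
      · exact ⟨(ih2 q h).1.trans hσ'σ, (ih2 q h).2⟩
    · rintro q hq
      rcases List.mem_cons.1 hq with h | h
      · subst h
        exact ⟨hτσ, hmσ'⟩
      · exact ⟨(ih3 q h).1.trans hσ'σ, (ih3 q h).2⟩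

/-- let W̃ be obtained from W by reversing the unique W-path from ∂ν to μ
(μ, ν critical). If φ ⊀_W ψ but φ ≺_{W̃} ψ, then φ ⪯_W ν and μ ⪯_W ψ. -/
theorem stmt9 [Fintype Cell] (dim : Cell → ℕ) (facet : Cell → Cell → Prop)
    (hdim : ∀ σ τ, facet σ τ → dim τ = dim σ + 1)
    (W : Set (Cell × Cell)) (hW : IsGradient facet W)
    (μ ν : Cell) (hμ : IsCritical W μ) (hν : IsCritical W ν)
    (σ0 : Cell) (l : List (Cell × Cell))
    (hΓ : facet σ0 ν ∧ IsVPath facet W σ0 l ∧ pathLast σ0 l = μ)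
    (huniq : ∀ σ0' l', facet σ0' ν → IsVPath facet W σ0' l' → pathLast σ0' l' = μ →
      σ0' = σ0 ∧ l' = l)
    (φ ψ : Cell)
    (h1 : ¬ indOrder facet W φ ψ)
    (h2 : indOrder facet (reverseField W ν σ0 l) φ ψ) :
    indOrderLe facet W φ ν ∧ indOrderLe facet W μ ψ := by
  obtain ⟨hfacσ0, hpath, hlast⟩ := hΓ
  obtain ⟨hP1, hP2, hP3⟩ := path_facts l σ0 hpath
  rw [hlast] at hP1 hP2 hP3
  have hσ0ν : covRel facet W σ0 ν := by
    refine Or.inl ⟨hfacσ0, fun h => ?_⟩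
    exact (hν _ h).2 rfl
  have hleν : indOrderLe facet W σ0 ν := Relation.ReflTransGen.single hσ0ν
  -- Any new covering edge of W̃ lies between μ and ν in ⪯_W.
  have hnewEdge : ∀ x y, covRel facet (reverseField W ν σ0 l) x y → ¬ covRel facet W x y →
      indOrderLe facet W x ν ∧ indOrderLe facet W μ y := by
    intro x y hxy hnot
    rcases hxy with ⟨hfac, hnin⟩ | hin
    · -- facet x y, (x,y) ∉ W̃, but then (x,y) ∈ W (else covRel W x y), so (x,y) ∈ oldPairs
      have hxyW : (x, y) ∈ W := by
        by_contra h
        exact hnot (Or.inl ⟨hfac, h⟩)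
      have hold : (x, y) ∈ oldPairs σ0 l := by
        by_contra h
        exact hnin (Or.inl (Or.inl ⟨hxyW, h⟩))
      obtain ⟨h1, h2⟩ := hP2 (x, y) hold
      exact ⟨h1.trans hleν, h2⟩
    · -- (y,x) ∈ W̃
      rcases hin with (hin | hin) | hin
      · exact absurd (Or.inr hin.1) hnot
      · obtain ⟨h1, h2⟩ := hP3 (y, x) hin
        exact ⟨h1.trans hleν, h2⟩
      · have : y = σ0 ∧ x = ν := by
          have := Set.mem_singleton_iff.1 hin
          exact ⟨congrArg Prod.fst this, congrArg Prod.snd this⟩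
        obtain ⟨hy, hx⟩ := this
        subst hy; subst hx
        exact ⟨Relation.ReflTransGen.refl, hP1⟩
  constructor
  · -- first new edge
    revert h1
    induction h2 with
    | @single b hab =>
      intro hn
      by_cases hc : covRel facet W φ b
      · exact absurd (Relation.TransGen.single hc) hn
      · exact (hnewEdge _ _ hab hc).1
    | @tail b c hac hcb ihc =>
      intro hn
      by_cases hW' : indOrder facet W φ b
      · by_cases hc : covRel facet W b c
        · exact absurd (hW'.tail hc) hn
        · exact hW'.to_reflTransGen.trans ((hnewEdge _ _ hcb hc).1)
      · exact ihc hW'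
  · -- last new edge: tail induction
    revert h1
    induction h2 with
    | @single b hab =>
      intro hn
      by_cases hc : covRel facet W φ b
      · exact absurd (Relation.TransGen.single hc) hn
      · exact (hnewEdge _ _ hab hc).2
    | @tail b c hac hcb ihc =>
      intro hn
      by_cases hc : covRel facet W b c
      · have hnφc : ¬ indOrder facet W φ b := fun h => hn (h.tail hc)
        exact (ihc hnφc).trans (Relation.ReflTransGen.single hc)
      · exact (hnewEdge _ _ hcb hc).2
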